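/- arXiv:1308.1059 — 6 statements merged into one kernel-verified Lean document; each statement's English description precedes it below -/
import Mathlib

section
/- Let A be a divisible abelian group and K a finite group acting on A by automorphisms such that A has no elements of order q for any prime q dividing |K|. Then the fixed-point subgroup C_A(K) = {a ∈ A : k·a = a for all k ∈ K} is divisible. -/
/-- Let `A` be a divisible abelian group and `K` a finite group acting on `A` by
automorphisms such that `A` has no elements of order `q` for any prime `q` dividing
`|K|`. Then the fixed-point subgroup `C_A(K)` is divisible. -/
theorem stmt_6 (A : Type*) [AddCommGroup A] (K : Type*) [Group K] [Fintype K]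
    [DistribMulAction K A]
    (hdiv : ∀ a : A, ∀ n : ℕ, 0 < n → ∃ b : A, n • b = a)
    (htf : ∀ q : ℕ, q.Prime → q ∣ Fintype.card K → ∀ a : A, q • a = 0 → a = 0) :
    ∀ a : A, (∀ k : K, k • a = a) → ∀ n : ℕ, 0 < n →
      ∃ b : A, (∀ k : K, k • b = b) ∧ n • b = a := by
  -- multiplication by any divisor of |K| is injective
  have tor : ∀ m : ℕ, m ∣ Fintype.card K → ∀ x : A, m • x = 0 → x = 0 := by
    intro m
    induction m using Nat.strong_induction_on with
    | _ m ih =>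
      intro hm x hx
      rcases eq_or_ne m 1 with rfl | h1
      · simpa using hx
      have hm0 : m ≠ 0 := by
        rintro rfl
        exact absurd (zero_dvd_iff.mp hm) Fintype.card_ne_zero
      obtain ⟨q, hq, hqm⟩ := Nat.exists_prime_and_dvd h1
      obtain ⟨m', rfl⟩ := hqm
      have hx' : q • (m' • x) = 0 := by
        rw [← mul_smul]; exact hx
      have hmx : m' • x = 0 := htf q hq (dvd_trans ⟨m', rfl⟩ hm) _ hx'
      have hlt : m' < q * m' := by
        have : 1 < q := hq.one_lt
        have hm'0 : 0 < m' := Nat.pos_of_ne_zero (by rintro rfl; simp at hm0)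
        calc m' = 1 * m' := (one_mul m').symm
        _ < q * m' := (Nat.mul_lt_mul_right hm'0).mpr this
      exact ih m' hlt (dvd_trans (dvd_mul_left m' q) hm) x hmx
  intro a ha n hn
  set m := Fintype.card K with hmdef
  have hm0 : 0 < m := Fintype.card_pos
  obtain ⟨c, hc⟩ := hdiv a (n * m) (Nat.mul_pos hn hm0)
  set b := ∑ k : K, k • c with hb
  have hfix : ∀ k : K, k • b = b := by
    intro k
    rw [hb, Finset.smul_sum]
    simp_rw [smul_smul]
    exact Fintype.sum_bijective (k * ·) (Group.mulLeft_bijective k)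
      (fun g => (k * g) • c) (fun g => g • c) (fun g => rfl)
  refine ⟨b, hfix, ?_⟩
  -- m • (n • b - a) = 0
  have key : m • (n • b) = m • a := by
    rw [hb, Finset.smul_sum, Finset.smul_sum]
    have : ∀ k : K, m • n • k • c = a := by
      intro k
      calc m • n • k • c = k • ((m * n) • c) := by
            rw [mul_smul, smul_comm n, smul_comm m]
        _ = k • a := by rw [mul_comm, hc]
        _ = a := ha k
    simp_rw [this]
    simp [hmdef]
  have : m • (n • b - a) = 0 := by
    rw [smul_sub, key, sub_self]
  have := tor m dvd_rfl _ this
  exact sub_eq_zero.mp this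
end

section
/- Let A be a finite abelian group with no elements of order p, and let E be an elementary abelian p-group of order p² acting on A by automorphisms. Then A is generated by the fixed-point subgroups C_A(E₀) as E₀ ranges over the subgroups of E of order p (equivalently of index p). -/
/-!
If every non-identity element of `E` has order `p` and `|E| = p²`, the subgroups of order `p`
partition `E \ {1}`, so there are `(p² - 1) / (p - 1) = p + 1` of them. Summing the traces
`∑_{x ∈ E₀} x • a` over these subgroups therefore counts `a` itself `p + 1` times and every
other `x • a` once: `∑_{E₀} ∑_{x ∈ E₀} x • a = ∑_{x ∈ E} x • a + p • a`. Each trace is fixed by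
its `E₀`, hence `p • a` lies in the subgroup generated by the fixed points, and `a ↦ p • a` is
onto since it is injective on the finite group `A`.
-/

open Finset

namespace Subgroup

variable {G : Type*} [Group G] {p : ℕ} [Fact p.Prime]

theorem eq_zpowers_of_card_eq_prime {H : Subgroup G} (hH : Nat.card H = p) {x : G}
    (hxH : x ∈ H) (hx : x ≠ 1) : H = zpowers x := by
  have : Finite H := Nat.finite_of_card_ne_zero (hH ▸ (Fact.out : p.Prime).ne_zero)
  have hdvd : orderOf x ∣ p := hH ▸ H.orderOf_dvd_natCard hxH
  have hord : orderOf x = p := ((Fact.out : p.Prime).eq_one_or_self_of_dvd _ hdvd).resolve_left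
    (orderOf_eq_one_iff.not.mpr hx)
  exact (eq_of_le_of_card_ge (zpowers_le.mpr hxH) (by rw [hH, Nat.card_zpowers, hord])).symm

theorem card_zpowers_of_pow_eq_one {x : G} (hxp : x ^ p = 1) (hx : x ≠ 1) :
    Nat.card (zpowers x) = p := by
  rw [Nat.card_zpowers, orderOf_eq_prime hxp hx]

theorem smul_sum_smul_of_mem {A : Type*} [AddCommMonoid A] [DistribMulAction G A]
    (H : Subgroup G) [Fintype H] {y : G} (hy : y ∈ H) (a : A) :
    y • ∑ x : H, (x : G) • a = ∑ x : H, (x : G) • a := by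
  simp_rw [Finset.smul_sum, ← mul_smul]
  exact Equiv.sum_comp (Equiv.mulLeft ⟨y, hy⟩) fun x : H => (x : G) • a

end Subgroup

theorem smul_sum_smul {G A : Type*} [Group G] [Fintype G] [AddCommMonoid A]
    [DistribMulAction G A] (y : G) (a : A) : y • ∑ x : G, x • a = ∑ x : G, x • a := by
  simp_rw [Finset.smul_sum, ← mul_smul]
  exact Equiv.sum_comp (Equiv.mulLeft y) fun x => x • a

section Partition

open scoped Classical

variable {G : Type*} [Group G] [Fintype G]

theorem sum_sum_subgroup_add_eq_of_partition {M : Type*} [AddCommMonoid M]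
    (𝒮 : Finset (Subgroup G)) (h𝒮 : ∀ x : G, x ≠ 1 → ∃! H, H ∈ 𝒮 ∧ x ∈ H) (f : G → M) :
    ∑ H ∈ 𝒮, ∑ x : H, f x + f 1 = ∑ x, f x + #𝒮 • f 1 := by
  have hinner : ∀ H : Subgroup G, ∑ x : H, f x = ∑ x, if x ∈ H then f x else 0 := fun H => by
    rw [← Finset.sum_filter]
    exact (Finset.sum_subtype _ (by simp) f).symm
  have hcount : ∀ x, ∑ H ∈ 𝒮, (if x ∈ H then f x else 0) = #{H ∈ 𝒮 | x ∈ H} • f x :=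
    fun x => by rw [← Finset.sum_filter, Finset.sum_const]
  have hunique : ∀ x : G, x ≠ 1 → #{H ∈ 𝒮 | x ∈ H} = 1 := fun x hx => by
    obtain ⟨H, hH, hHuniq⟩ := h𝒮 x hx
    refine Finset.card_eq_one.mpr ⟨H, ?_⟩
    ext K
    simpa using ⟨hHuniq K, by rintro rfl; exact hH⟩
  simp_rw [hinner]
  rw [Finset.sum_comm, Finset.sum_congr rfl fun x _ => hcount x,
    Fintype.sum_eq_add_sum_compl 1, Fintype.sum_eq_add_sum_compl 1 f,
    Finset.sum_congr rfl fun x hx => by rw [hunique x (by simpa using hx), one_smul]]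
  simp only [Subgroup.one_mem, Finset.filter_true]
  abel

variable {p : ℕ} [Fact p.Prime]

theorem existsUnique_mem_card_eq_prime (hG : ∀ x : G, x ^ p = 1) {x : G} (hx : x ≠ 1) :
    ∃! H, H ∈ ({H : Subgroup G | Nat.card H = p} : Finset _) ∧ x ∈ H :=
  ⟨Subgroup.zpowers x,
    ⟨by simpa using Subgroup.card_zpowers_of_pow_eq_one (hG x) hx, Subgroup.mem_zpowers x⟩,
    fun H ⟨hH, hxH⟩ => Subgroup.eq_zpowers_of_card_eq_prime (by simpa using hH) hxH hx⟩

theorem card_subgroups_card_eq_prime (hG : ∀ x : G, x ^ p = 1) (hcard : Nat.card G = p ^ 2) :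
    #{H : Subgroup G | Nat.card H = p} = p + 1 := by
  set k := #{H : Subgroup G | Nat.card H = p}
  have hcount := sum_sum_subgroup_add_eq_of_partition _
    (fun _ => existsUnique_mem_card_eq_prime hG) fun _ => (1 : ℕ)
  simp only [Finset.sum_const, Finset.card_univ, ← Nat.card_eq_fintype_card, hcard,
    smul_eq_mul, mul_one] at hcount
  rw [Finset.sum_congr rfl fun H hH => (mem_filter.mp hH).2, Finset.sum_const,
    smul_eq_mul] at hcount
  have hZ : ((k : ℤ) - (p + 1)) * (p - 1) = 0 := by
    linear_combination (by exact_mod_cast hcount : (k : ℤ) * p + 1 = p ^ 2 + k)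
  have hp1 : (p : ℤ) - 1 ≠ 0 := sub_ne_zero.mpr (by exact_mod_cast (Fact.out : p.Prime).one_lt.ne')
  exact_mod_cast sub_eq_zero.mp ((mul_eq_zero.mp hZ).resolve_right hp1)

theorem nsmul_mem_closure_fixedPoints {A : Type*} [AddCommGroup A] [DistribMulAction G A]
    (hG : ∀ x : G, x ^ p = 1) (hcard : Nat.card G = p ^ 2) (a : A) :
    p • a ∈ AddSubgroup.closure
      {a : A | ∃ H : Subgroup G, Nat.card H = p ∧ ∀ x ∈ H, x • a = a} := by
  set C := AddSubgroup.closure {a : A | ∃ H : Subgroup G, Nat.card H = p ∧ ∀ x ∈ H, x • a = a}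
  set 𝒮 : Finset (Subgroup G) := {H | Nat.card H = p}
  have h𝒮 : #𝒮 = p + 1 := card_subgroups_card_eq_prime hG hcard
  have htrace : ∀ H ∈ 𝒮, ∑ x : H, (x : G) • a ∈ C := fun H hH =>
    AddSubgroup.subset_closure ⟨H, (mem_filter.mp hH).2, fun _ hy => H.smul_sum_smul_of_mem hy a⟩
  obtain ⟨H₀, hH₀⟩ : 𝒮.Nonempty := Finset.card_pos.mp (by omega)
  have hfull : ∑ x : G, x • a ∈ C :=
    AddSubgroup.subset_closure ⟨H₀, (mem_filter.mp hH₀).2, fun y _ => smul_sum_smul y a⟩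
  have hid := sum_sum_subgroup_add_eq_of_partition 𝒮
    (fun _ => existsUnique_mem_card_eq_prime hG) fun x => x • a
  rw [one_smul, h𝒮, succ_nsmul, ← add_assoc, add_left_inj] at hid
  rw [show p • a = ∑ H ∈ 𝒮, ∑ x : H, (x : G) • a - ∑ x : G, x • a by rw [hid]; abel]
  exact sub_mem (sum_mem htrace) hfull

end Partition

theorem pow_eq_one_of_multiplicative_zmod_prod {p : ℕ} [NeZero p]
    (x : Multiplicative (ZMod p) × Multiplicative (ZMod p)) : x ^ p = 1 := by
  refine Prod.ext ?_ ?_ <;> simpa using pow_card_eq_one' (G := Multiplicative (ZMod p))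

/-- Let `A` be a finite abelian group with no elements of order `p`, and let `E` be an
elementary abelian `p`-group of order `p ^ 2` acting on `A` by automorphisms. Then `A`
is generated by the fixed-point subgroups `C_A(E₀)` as `E₀` ranges over the subgroups
of `E` of order `p`. -/
theorem stmt_8 (p : ℕ) (hp : p.Prime) (A : Type*) [AddCommGroup A] [Finite A]
    (htf : ∀ a : A, p • a = 0 → a = 0)
    (E : Type*) [Group E]
    (hE : Nonempty (E ≃* (Multiplicative (ZMod p) × Multiplicative (ZMod p))))
    [DistribMulAction E A] :
    AddSubgroup.closure
      {a : A | ∃ E₀ : Subgroup E, Nat.card E₀ = p ∧ ∀ x ∈ E₀, x • a = a} = ⊤ := by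
  obtain ⟨e⟩ := hE
  have : Fact p.Prime := ⟨hp⟩
  have : Fintype E := @Fintype.ofFinite _ (.of_equiv _ e.symm.toEquiv)
  have hexp : ∀ x : E, x ^ p = 1 := fun x =>
    e.injective (by rw [map_pow, map_one, pow_eq_one_of_multiplicative_zmod_prod])
  have hcard : Nat.card E = p ^ 2 := by rw [Nat.card_congr e.toEquiv]; simp [sq]
  have hsurj : Function.Surjective (fun a : A => p • a) :=
    Finite.injective_iff_surjective.mp fun a b hab => sub_eq_zero.mp (htf _ (by
      simpa [nsmul_sub, sub_eq_zero] using hab))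
  refine eq_top_iff.mpr fun a _ => ?_
  obtain ⟨b, rfl⟩ := hsurj a
  exact nsmul_mem_closure_fixedPoints hexp hcard b
end

section
/- Let G be a group, E an elementary abelian p-subgroup of G of order at least p³, and θ an assignment from nontrivial elements of E to subgroups of G satisfying: (a) θ(s)^g = θ(s^g) whenever s, s^g are nontrivial elements of E; (b) θ(s) ∩ C_G(t) ≤ θ(t) for all nontrivial s, t ∈ E; and (c) for every nontrivial s ∈ E and every subgroup F ≤ E of order at least p², θ(s) = ⟨θ(s) ∩ C_G(t) : t ∈ F, t ≠ 1⟩. Then for any two subgroups E₁, E₂ of E, each of order at least p², one has θ(E₁) = θ(E₂), where θ(F) := ⟨θ(s) : s ∈ F, s ≠ 1⟩. -/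
/-- Let `E` be an elementary abelian `p`-subgroup of `G` of order at least `p ^ 3` and
`θ` an `E`-signalizer functor: (a) conjugation-equivariant, (b) balanced, and (c)
generated by its intersections with centralizers of nontrivial elements of any
subgroup `F ≤ E` of order at least `p ^ 2`.  Then `θ(E₁) = θ(E₂)` for any two
subgroups `E₁, E₂ ≤ E` of order at least `p ^ 2`, where
`θ(F) = ⟨θ(s) : s ∈ F, s ≠ 1⟩`. -/
theorem stmt_12 (G : Type*) [Group G] (p : ℕ) (hp : p.Prime)
    (E : Subgroup G) (hcard : p ^ 3 ≤ Nat.card E)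
    (hexp : ∀ x ∈ E, x ^ p = 1) (hcomm : ∀ x ∈ E, ∀ y ∈ E, Commute x y)
    (θ : G → Subgroup G)
    (ha : ∀ g s : G, s ∈ E → s ≠ 1 → g⁻¹ * s * g ∈ E → g⁻¹ * s * g ≠ 1 →
      (θ s).map (MulAut.conj g⁻¹).toMonoidHom = θ (g⁻¹ * s * g))
    (hb : ∀ s ∈ E, ∀ t ∈ E, s ≠ 1 → t ≠ 1 →
      θ s ⊓ Subgroup.centralizer {t} ≤ θ t)
    (hc : ∀ s ∈ E, s ≠ 1 → ∀ F : Subgroup G, F ≤ E → p ^ 2 ≤ Nat.card F →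
      θ s = ⨆ t ∈ {t : G | t ∈ F ∧ t ≠ 1}, (θ s ⊓ Subgroup.centralizer {t})) :
    ∀ E₁ E₂ : Subgroup G, E₁ ≤ E → E₂ ≤ E →
      p ^ 2 ≤ Nat.card E₁ → p ^ 2 ≤ Nat.card E₂ →
      (⨆ s ∈ {s : G | s ∈ E₁ ∧ s ≠ 1}, θ s) = ⨆ s ∈ {s : G | s ∈ E₂ ∧ s ≠ 1}, θ s := by
  intro E₁ E₂ h1 h2 hc1 hc2
  have key : ∀ F₁ F₂ : Subgroup G, F₁ ≤ E → F₂ ≤ E → p ^ 2 ≤ Nat.card F₂ →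
      (⨆ s ∈ {s : G | s ∈ F₁ ∧ s ≠ 1}, θ s) ≤ ⨆ s ∈ {s : G | s ∈ F₂ ∧ s ≠ 1}, θ s := by
    intro F₁ F₂ hF1 hF2 hcF2
    refine iSup₂_le fun s hs => ?_
    rw [hc s (hF1 hs.1) hs.2 F₂ hF2 hcF2]
    refine iSup₂_le fun t ht => ?_
    exact le_trans (hb s (hF1 hs.1) t (hF2 ht.1) hs.2 ht.2)
      (le_iSup₂ (f := fun t _ => θ t) t ht)
  exact le_antisymm (key E₁ E₂ h1 h2 hc2) (key E₂ E₁ h2 h1 hc1)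
end

section
/- Under the hypotheses of the previous statement (E elementary abelian of order ≥ p³ and θ an E-signalizer functor with the generation property), if g ∈ G normalizes some subgroup E₁ of E of order at least p², then g normalizes θ(E) = ⟨θ(s) : s ∈ E, s ≠ 1⟩. -/
/-- Under the hypotheses of the signalizer functor statement (`E` elementary abelian of
order at least `p ^ 3` and `θ` an `E`-signalizer functor with the generation property),
if `g ∈ G` normalizes some subgroup `E₁ ≤ E` of order at least `p ^ 2`, then `g`
normalizes `θ(E) = ⟨θ(s) : s ∈ E, s ≠ 1⟩`. -/
theorem stmt_13 (G : Type*) [Group G] (p : ℕ) (hp : p.Prime)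
    (E : Subgroup G) (hcard : p ^ 3 ≤ Nat.card E)
    (hexp : ∀ x ∈ E, x ^ p = 1) (hcomm : ∀ x ∈ E, ∀ y ∈ E, Commute x y)
    (θ : G → Subgroup G)
    (ha : ∀ g s : G, s ∈ E → s ≠ 1 → g⁻¹ * s * g ∈ E → g⁻¹ * s * g ≠ 1 →
      (θ s).map (MulAut.conj g⁻¹).toMonoidHom = θ (g⁻¹ * s * g))
    (hb : ∀ s ∈ E, ∀ t ∈ E, s ≠ 1 → t ≠ 1 →
      θ s ⊓ Subgroup.centralizer {t} ≤ θ t)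
    (hc : ∀ s ∈ E, s ≠ 1 → ∀ F : Subgroup G, F ≤ E → p ^ 2 ≤ Nat.card F →
      θ s = ⨆ t ∈ {t : G | t ∈ F ∧ t ≠ 1}, (θ s ⊓ Subgroup.centralizer {t}))
    (g : G) (E₁ : Subgroup G) (hE₁ : E₁ ≤ E) (hcard₁ : p ^ 2 ≤ Nat.card E₁)
    (hnorm : E₁.map (MulAut.conj g).toMonoidHom = E₁) :
    (⨆ s ∈ {s : G | s ∈ E ∧ s ≠ 1}, θ s).map (MulAut.conj g).toMonoidHom =
      ⨆ s ∈ {s : G | s ∈ E ∧ s ≠ 1}, θ s := by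
  -- g maps E₁ into E₁
  have hmem : ∀ t ∈ E₁, g * t * g⁻¹ ∈ E₁ := by
    intro t ht
    have : (MulAut.conj g).toMonoidHom t ∈ E₁.map (MulAut.conj g).toMonoidHom :=
      Subgroup.mem_map_of_mem _ ht
    rw [hnorm] at this
    simpa [MulAut.conj_apply] using this
  have hmem' : ∀ t ∈ E₁, g⁻¹ * t * g ∈ E₁ := by
    intro t ht
    rw [← hnorm] at ht
    rcases ht with ⟨x, hx, hxe⟩
    simp only [MulEquiv.coe_toMonoidHom, MulAut.conj_apply] at hxe
    have : x = g⁻¹ * t * g := by rw [← hxe]; group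
    rwa [← this]
  have hne : ∀ t : G, t ≠ 1 → g * t * g⁻¹ ≠ 1 := by
    intro t ht h
    apply ht
    have := congrArg (fun x => g⁻¹ * x * g) h
    simpa [mul_assoc] using this
  have hne' : ∀ t : G, t ≠ 1 → g⁻¹ * t * g ≠ 1 := by
    intro t ht h
    apply ht
    have := congrArg (fun x => g * x * g⁻¹) h
    simpa [mul_assoc] using this
  -- θ(E) = θ(E₁)
  have key : (⨆ s ∈ {s : G | s ∈ E ∧ s ≠ 1}, θ s)
      = ⨆ t ∈ {t : G | t ∈ E₁ ∧ t ≠ 1}, θ t := by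
    apply le_antisymm
    · apply iSup₂_le
      intro s hs
      rw [hc s hs.1 hs.2 E₁ hE₁ hcard₁]
      apply iSup₂_le
      intro t ht
      exact le_trans (hb s hs.1 t (hE₁ ht.1) hs.2 ht.2)
        (le_iSup₂ (f := fun t _ => θ t) t ht)
    · apply iSup₂_le
      intro t ht
      exact le_iSup₂ (f := fun s (_ : s ∈ {s : G | s ∈ E ∧ s ≠ 1}) => θ s) t
        ⟨hE₁ ht.1, ht.2⟩
  rw [key]
  -- equivariance on elements of E₁
  have hconj : ∀ t ∈ E₁, t ≠ 1 →
      (θ t).map (MulAut.conj g).toMonoidHom = θ (g * t * g⁻¹) := by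
    intro t ht ht1
    have := ha g⁻¹ t (hE₁ ht) ht1
      (by simpa using hE₁ (hmem t ht)) (by simpa [mul_assoc] using hne t ht1)
    simpa [mul_assoc] using this
  rw [Subgroup.map_iSup]
  apply le_antisymm
  · apply iSup_le
    intro t
    rw [Subgroup.map_iSup]
    apply iSup_le
    intro ht
    rw [hconj t ht.1 ht.2]
    exact le_iSup₂ (f := fun t (_ : t ∈ {t : G | t ∈ E₁ ∧ t ≠ 1}) => θ t)
      (g * t * g⁻¹) ⟨hmem t ht.1, hne t ht.2⟩
  · apply iSup₂_le
    intro t ht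
    have h1 : g⁻¹ * t * g ∈ E₁ := hmem' t ht.1
    have h2 : g⁻¹ * t * g ≠ 1 := hne' t ht.2
    have h3 : (θ (g⁻¹ * t * g)).map (MulAut.conj g).toMonoidHom = θ t := by
      have := hconj (g⁻¹ * t * g) h1 h2
      have he : g * (g⁻¹ * t * g) * g⁻¹ = t := by group
      rwa [he] at this
    calc θ t = (θ (g⁻¹ * t * g)).map (MulAut.conj g).toMonoidHom := h3.symm
      _ ≤ ⨆ t, ⨆ _ : t ∈ {t : G | t ∈ E₁ ∧ t ≠ 1},
            (θ t).map (MulAut.conj g).toMonoidHom := by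
          exact le_iSup₂ (f := fun t (_ : t ∈ {t : G | t ∈ E₁ ∧ t ≠ 1}) =>
            (θ t).map (MulAut.conj g).toMonoidHom) (g⁻¹ * t * g) ⟨h1, h2⟩
      _ ≤ _ := by
          apply iSup_mono
          intro t'
          rw [Subgroup.map_iSup]
end

section
/- Let G be a group, N a normal subgroup, and x ∈ G an element whose image in G/N has finite order n. If N is a divisible abelian group, then the coset xN contains an element of finite order whose order divides a power of n (in particular, involving only prime divisors of n). -/
/-- Let `G` be a group, `N` a normal subgroup which is divisible abelian, and `x ∈ G`
an element whose image in `G/N` has finite order `n > 0`.  Then the coset `xN` contains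
an element of finite order whose order divides a power of `n` (so its order involves
only prime divisors of `n`). -/
theorem stmt_16 (G : Type*) [Group G] (N : Subgroup G) [N.Normal]
    (habel : ∀ a ∈ N, ∀ b ∈ N, Commute a b)
    (hdiv : ∀ a ∈ N, ∀ m : ℕ, 0 < m → ∃ b ∈ N, b ^ m = a)
    (x : G) (n : ℕ) (hn : 0 < n)
    (hord : orderOf (QuotientGroup.mk x : G ⧸ N) = n) :
    ∃ y : G, (∃ z ∈ N, y = x * z) ∧ IsOfFinOrder y ∧ ∃ k : ℕ, orderOf y ∣ n ^ k := by
  have hxn : x ^ n ∈ N := by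
    have h1 : (QuotientGroup.mk x : G ⧸ N) ^ n = 1 := by
      rw [← hord]; exact pow_orderOf_eq_one _
    rwa [← QuotientGroup.mk_pow, QuotientGroup.eq_one_iff] at h1
  obtain ⟨b, hbN, hb⟩ := hdiv ((x ^ n)⁻¹) (N.inv_mem hxn) n hn
  set c : ℕ → G := fun i => (x ^ i)⁻¹ * b * x ^ i with hc_def
  have hc : ∀ i, c i ∈ N := by
    intro i
    have := (‹N.Normal›).conj_mem b hbN ((x ^ i)⁻¹)
    simpa [hc_def] using this
  set Q : ℕ → G := fun m => ((List.range m).map c).prod with hQ_def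
  have hQmem : ∀ m, Q m ∈ N := by
    intro m
    refine Subgroup.list_prod_mem N ?_
    intro g hg
    simp only [List.mem_map] at hg
    obtain ⟨i, -, rfl⟩ := hg
    exact hc i
  have hQsucc : ∀ m, Q (m + 1) = Q m * c m := by
    intro m
    simp [hQ_def, List.range_succ]
  have key : ∀ m, (x * b) ^ m = x ^ m * Q m := by
    intro m
    induction m with
    | zero => simp [hQ_def]
    | succ m ih =>
      have hcomm : Commute (Q m) (c m) := habel _ (hQmem m) _ (hc m)
      calc (x * b) ^ (m + 1) = (x * b) * (x * b) ^ m := by rw [pow_succ']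
        _ = x * b * (x ^ m * Q m) := by rw [ih]
        _ = x ^ (m + 1) * (c m * Q m) := by
            simp only [hc_def]
            group
        _ = x ^ (m + 1) * (Q m * c m) := by rw [hcomm.eq]
        _ = x ^ (m + 1) * Q (m + 1) := by rw [hQsucc m]
  have hcn : ∀ i, (c i) ^ n = (x ^ n)⁻¹ := by
    intro i
    have h1 : (c i) ^ n = (x ^ i)⁻¹ * b ^ n * x ^ i := by
      have : c i = (x ^ i)⁻¹ * b * ((x ^ i)⁻¹)⁻¹ := by simp [hc_def]
      rw [this, conj_pow]
      simp
    rw [h1, hb]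
    have hx : Commute ((x ^ i)⁻¹) ((x ^ n)⁻¹) := (Commute.pow_pow_self x i n).inv_inv
    rw [hx.eq]
    group
  have hQn : ∀ m, (Q m) ^ n = ((x ^ n)⁻¹) ^ m := by
    intro m
    induction m with
    | zero => simp [hQ_def]
    | succ m ih =>
      have hcomm : Commute (Q m) (c m) := habel _ (hQmem m) _ (hc m)
      rw [hQsucc m, hcomm.mul_pow, ih, hcn, pow_succ]
  have hy : (x * b) ^ (n * n) = 1 := by
    rw [pow_mul, key n]
    have hcomm : Commute (x ^ n) (Q n) := habel _ hxn _ (hQmem n)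
    rw [hcomm.mul_pow, hQn n, ← inv_pow]
    group
  refine ⟨x * b, ⟨b, hbN, rfl⟩, ?_, 2, ?_⟩
  · exact isOfFinOrder_iff_pow_eq_one.mpr ⟨n * n, by positivity, hy⟩
  · rw [pow_two]
    exact orderOf_dvd_of_pow_eq_one hy
end

section
/- Let G be a finite group, p a prime, M a p-strongly embedded subgroup of G, and S a Sylow p-subgroup of M. Then S is a Sylow p-subgroup of G. -/
/-- Let `G` be a finite group, `M` a `p`-strongly embedded subgroup of `G`, and `S` a
Sylow `p`-subgroup of `M`.  Then (the image in `G` of) `S` is a Sylow `p`-subgroup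
of `G`. -/
theorem stmt_18 (G : Type*) [Group G] [Finite G] (p : ℕ) [hp : Fact p.Prime]
    (M : Subgroup G) (hpM : p ∣ Nat.card M)
    (hse : ∀ g : G, g ∉ M →
      Nat.Coprime (Nat.card (M ⊓ M.map (MulAut.conj g⁻¹).toMonoidHom : Subgroup G)) p)
    (S : Sylow p M) :
    ∃ T : Sylow p G, (T : Subgroup G) = (S : Subgroup M).map M.subtype := by
  set P : Subgroup G := (S : Subgroup M).map M.subtype with hPdef
  have hPM : P ≤ M := Subgroup.map_subtype_le _
  have hPp : IsPGroup p P := S.isPGroup'.map M.subtype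
  obtain ⟨T, hPT⟩ := hPp.exists_le_sylow
  refine ⟨T, ?_⟩
  -- `p` divides the cardinality of `P`
  have hcardS : p ∣ Nat.card S := by
    rw [Sylow.card_eq_multiplicity]
    exact dvd_pow_self p
      ((Nat.Prime.factorization_pos_of_dvd hp.out Nat.card_pos.ne' hpM)).ne'
  have hcardP : p ∣ Nat.card P := by
    have : Nat.card P = Nat.card S :=
      (Nat.card_congr (Subgroup.equivMapOfInjective (S : Subgroup M) M.subtype
        M.subtype_injective).toEquiv).symm
    rwa [this]
  by_contra hne
  -- P is a proper subgroup of T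
  have hlt : P.subgroupOf T < ⊤ := by
    rw [lt_top_iff_ne_top]
    intro htop
    exact hne (le_antisymm (Subgroup.subgroupOf_eq_top.mp htop) hPT)
  haveI : Group.IsNilpotent ↥(T : Subgroup G) := T.isPGroup'.isNilpotent
  have hlt2 := normalizerCondition_of_isNilpotent (G := ↥(T : Subgroup G)) _ hlt
  obtain ⟨x', hx'norm, hx'P⟩ := SetLike.exists_of_lt hlt2
  set x : G := (x' : G) with hxdef
  have hxT : x ∈ (T : Subgroup G) := x'.2
  have hxP : x ∉ P := fun h => hx'P (Subgroup.mem_subgroupOf.mpr h)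
  -- x normalizes P
  have hconj : ∀ g ∈ P, x * g * x⁻¹ ∈ P := by
    intro g hg
    have h1 : (⟨g, hPT hg⟩ : ↥(T : Subgroup G)) ∈ P.subgroupOf T :=
      Subgroup.mem_subgroupOf.mpr hg
    have h2 := (Subgroup.mem_normalizer_iff.mp hx'norm ⟨g, hPT hg⟩).mp h1
    exact Subgroup.mem_subgroupOf.mp h2
  -- x ∈ M by strong embedding
  have hxM : x ∈ M := by
    by_contra hxnM
    have hco := hse x hxnM
    have hle : P ≤ M ⊓ M.map (MulAut.conj x⁻¹).toMonoidHom := by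
      intro g hg
      refine ⟨hPM hg, ⟨x * g * x⁻¹, hPM (hconj g hg), ?_⟩⟩
      simp [mul_assoc]
    have hdvd : p ∣ Nat.card (M ⊓ M.map (MulAut.conj x⁻¹).toMonoidHom : Subgroup G) :=
      hcardP.trans (Subgroup.card_dvd_of_le hle)
    exact hp.out.not_dvd_one (hco ▸ Nat.dvd_gcd hdvd dvd_rfl)
  -- the subgroup generated by P and x
  set Q : Subgroup G := P ⊔ Subgroup.zpowers x with hQdef
  have hQT : Q ≤ T := sup_le hPT (Subgroup.zpowers_le.mpr hxT)
  have hQM : Q ≤ M := sup_le hPM (Subgroup.zpowers_le.mpr hxM)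
  have hQp : IsPGroup p Q := T.isPGroup'.to_le hQT
  have hQp' : IsPGroup p (Q.subgroupOf M) :=
    hQp.of_equiv (Subgroup.subgroupOfEquivOfLe hQM).symm
  have hSQ : (S : Subgroup M) ≤ Q.subgroupOf M := by
    intro s hs
    refine Subgroup.mem_subgroupOf.mpr (le_sup_left (a := P) ?_)
    exact ⟨s, hs, rfl⟩
  have hQS : Q.subgroupOf M = S := S.is_maximal' hQp' hSQ
  have hxQ : x ∈ Q := le_sup_right (a := P) (Subgroup.mem_zpowers x)
  have : (⟨x, hxM⟩ : M) ∈ (S : Subgroup M) := hQS ▸ Subgroup.mem_subgroupOf.mpr hxQ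
  exact hxP ⟨⟨x, hxM⟩, this, rfl⟩
end
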